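/- arXiv:1805.03178 — 4 statements merged into one kernel-verified Lean document; each statement's English description precedes it below -/
import Mathlib

section
/- For s ∈ ℕ, the identity of formal power series (1 - q²) / Π_{a,b ∈ {1,-1}} (1 - u^a v^b q) = Σ_{k=0}^∞ χ_k(u) χ_k(v) q^k holds, where χ_k(u) = u^k + u^{k-2} + ⋯ + u^{-k}. -/
/-- The SL₂ character `χ_k(u) = u^k + u^{k-2} + ⋯ + u^{-k}`, for a unit `u`
in a commutative ring. -/
def chi {R : Type*} [CommRing R] (u : Rˣ) (k : ℕ) : R :=
  ∑ j ∈ Finset.range (k + 1), (u : R) ^ (k - j) * ((↑(u⁻¹) : R)) ^ j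

/-! Each sequence `χ_k(u)` satisfies `χ_{k+2} = (u + u⁻¹) χ_{k+1} - χ_k`, whose characteristic
roots are `u^{±1}`; hence the products `χ_k(u) χ_k(v)` satisfy the order-four recurrence whose
characteristic roots are the four products `u^{±1} v^{±1}`. Its reciprocal characteristic
polynomial is the denominator `∏ (1 - u^a v^b q)`, so multiplying the series by the denominator
leaves a cubic polynomial determined by `χ_0, …, χ_3`, and that polynomial is `1 - q²`. -/

section

open PowerSeries

variable {R : Type*} [CommRing R]

section Chi

variable (u : Rˣ)

lemma chi_zero : chi u 0 = 1 := by
  simp [chi]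

lemma chi_one : chi u 1 = u + ↑u⁻¹ := by
  simp [chi, Finset.sum_range_succ]

lemma chi_succ (n : ℕ) : chi u (n + 1) = (u : R) ^ (n + 1) + ↑u⁻¹ * chi u n := by
  rw [chi, Finset.sum_range_succ', chi, Finset.mul_sum, add_comm]
  simp only [Nat.add_sub_add_right, Nat.sub_zero, pow_zero, mul_one]
  exact congrArg _ (Finset.sum_congr rfl fun j _ => by ring)

lemma chi_add_two (n : ℕ) : chi u (n + 2) = (u + ↑u⁻¹) * chi u (n + 1) - chi u n := by
  linear_combination chi_succ u (n + 1) - (u : R) * chi_succ u n - chi u n * u.mul_inv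

lemma chi_two : chi u 2 = (u + ↑u⁻¹) ^ 2 - 1 := by
  rw [chi_add_two, chi_one, chi_zero]
  ring

lemma chi_three : chi u 3 = (u + ↑u⁻¹) ^ 3 - 2 * (u + ↑u⁻¹) := by
  rw [chi_add_two, chi_two, chi_one]
  ring

end Chi

lemma mul_add_four_of_add_two {x y : ℕ → R} {s t : R}
    (hx : ∀ n, x (n + 2) = s * x (n + 1) - x n) (hy : ∀ n, y (n + 2) = t * y (n + 1) - y n)
    (n : ℕ) :
    x (n + 4) * y (n + 4) - s * t * (x (n + 3) * y (n + 3))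
      + (s ^ 2 + t ^ 2 - 2) * (x (n + 2) * y (n + 2))
      - s * t * (x (n + 1) * y (n + 1)) + x n * y n = 0 := by
  rw [hx (n + 2), hy (n + 2), hx (n + 1), hy (n + 1), hx n, hy n]
  ring

namespace PowerSeries

lemma mk_mul_reciprocal_quartic {c : ℕ → R} {a b : R}
    (hc : ∀ n, c (n + 4) - a * c (n + 3) + b * c (n + 2) - a * c (n + 1) + c n = 0) :
    mk c * (1 - C a * X + C b * X ^ 2 - C a * X ^ 3 + X ^ 4) =
      C (c 0) + C (c 1 - a * c 0) * X + C (c 2 - a * c 1 + b * c 0) * X ^ 2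
        + C (c 3 - a * c 2 + b * c 1 - a * c 0) * X ^ 3 := by
  have hsplit : mk c * (1 - C a * X + C b * X ^ 2 - C a * X ^ 3 + X ^ 4) =
      mk c - C a * (mk c * X ^ 1) + C b * (mk c * X ^ 2) - C a * (mk c * X ^ 3)
        + mk c * X ^ 4 := by ring
  ext n
  rw [hsplit]
  simp only [map_add, map_sub, coeff_C_mul, coeff_mul_X_pow', coeff_mk, coeff_C]
  rcases n with _ | _ | _ | _ | n
  iterate 4 simp
  simpa using hc n

lemma C_val_mul_C_val_inv (w : Rˣ) : C (w : R) * C (↑w⁻¹ : R) = 1 := by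
  rw [← map_mul, w.mul_inv, map_one]

lemma one_sub_C_mul_X_mul_one_sub_C_inv_mul_X (w : Rˣ) :
    (1 - C (w : R) * X) * (1 - C (↑w⁻¹ : R) * X) = 1 - C (w + ↑w⁻¹ : R) * X + X ^ 2 := by
  rw [map_add]
  linear_combination X ^ 2 * C_val_mul_C_val_inv w

lemma prod_one_sub_C_mul_X_units (u v : Rˣ) :
    (1 - C ((u : R) * v) * X) * (1 - C ((u : R) * ↑v⁻¹) * X) * (1 - C (↑u⁻¹ * (v : R)) * X) *
        (1 - C (↑u⁻¹ * ↑v⁻¹ : R) * X) =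
      1 - C ((u + ↑u⁻¹) * (v + ↑v⁻¹) : R) * X
        + C ((u + ↑u⁻¹) ^ 2 + (v + ↑v⁻¹) ^ 2 - 2 : R) * X ^ 2
        - C ((u + ↑u⁻¹) * (v + ↑v⁻¹) : R) * X ^ 3 + X ^ 4 := by
  have huv := one_sub_C_mul_X_mul_one_sub_C_inv_mul_X (u * v)
  have huv' := one_sub_C_mul_X_mul_one_sub_C_inv_mul_X (u * v⁻¹)
  simp only [mul_inv, inv_inv, Units.val_mul] at huv huv'
  calc _ = ((1 - C ((u : R) * v) * X) * (1 - C (↑u⁻¹ * ↑v⁻¹ : R) * X)) *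
          ((1 - C ((u : R) * ↑v⁻¹) * X) * (1 - C (↑u⁻¹ * v : R) * X)) := by ring
    _ = _ := by
      rw [huv, huv']
      simp only [map_add, map_sub, map_mul, map_pow, map_ofNat]
      linear_combination X ^ 2 * ((C (v : R) ^ 2 + C (↑v⁻¹ : R) ^ 2 - 2) * C_val_mul_C_val_inv u
        + (C (u : R) ^ 2 + C (↑u⁻¹ : R) ^ 2 - 2) * C_val_mul_C_val_inv v)

end PowerSeries

end

open PowerSeries in
/-- The formal power series identity
`(1 - q²) / Π_{a,b ∈ {1,-1}} (1 - u^a v^b q) = Σ_{k=0}^∞ χ_k(u) χ_k(v) q^k`,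
stated with denominators cleared. -/
theorem powerSeries_chi_identity {R : Type*} [CommRing R] (u v : Rˣ) :
    (PowerSeries.mk fun k => chi u k * chi v k) *
        ((1 - C ((u : R) * (v : R)) * X) * (1 - C ((u : R) * (↑(v⁻¹) : R)) * X) *
          (1 - C ((↑(u⁻¹) : R) * (v : R)) * X) *
          (1 - C ((↑(u⁻¹) : R) * (↑(v⁻¹) : R)) * X)) =
      1 - X ^ 2 := by
  rw [prod_one_sub_C_mul_X_units, mk_mul_reciprocal_quartic (c := fun k => chi u k * chi v k)
    (mul_add_four_of_add_two (chi_add_two u) (chi_add_two v))]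
  simp only [chi_zero, chi_one, chi_two, chi_three, map_add, map_sub, map_mul, map_pow, map_one,
    map_ofNat]
  ring
end

section
/- For m ∈ ℕ^r, the set λ_m equals the union over j = 0, 1, …, m_min of Shell(λ_{m − j·(1,…,1)}), where m_min = min_i m_i; moreover this union is disjoint. -/
/-- `p ∈ λ_m` iff for each `i` (indices mod `r`),
`|m_{i−1} − m_i| ≤ p_i ≤ m_{i−1} + m_i` and `p_i ≡ m_{i−1} + m_i (mod 2)`. -/
def memSmallLambda {r : ℕ} [NeZero r] (m p : Fin r → ℕ) : Prop :=
  ∀ i : Fin r,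
    (m (i - 1) ≤ p i + m i ∧ m i ≤ p i + m (i - 1) ∧ p i ≤ m (i - 1) + m i) ∧
      p i % 2 = (m (i - 1) + m i) % 2

/-- `p ∈ Shell(λ_m)` iff `p ∈ λ_m` and `p + (2,…,2) ∉ λ_m`. -/
def memShellSmallLambda {r : ℕ} [NeZero r] (m p : Fin r → ℕ) : Prop :=
  memSmallLambda m p ∧ ¬ memSmallLambda m (fun i => p i + 2)

private lemma mem_sub_iff {r : ℕ} [NeZero r] (m : Fin r → ℕ) (j : ℕ) (hj : ∀ i, j ≤ m i)
    (p : Fin r → ℕ) :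
    memSmallLambda (fun i => m i - j) p ↔
      memSmallLambda m p ∧ ∀ i, p i + 2 * j ≤ m (i - 1) + m i := by
  simp only [memSmallLambda]
  constructor
  · intro h
    refine ⟨fun i => ?_, fun i => ?_⟩ <;>
      · have h1 := h i
        have := hj i; have := hj (i - 1)
        omega
  · rintro ⟨h, hb⟩ i
    have h1 := h i
    have h2 := hb i
    have := hj i; have := hj (i - 1)
    omega

/-- `λ_m` is the disjoint union over `j = 0,1,…,min_i m_i` of
`Shell(λ_{m − j·(1,…,1)})` (the condition `j ≤ min_i m_i` is expressed as
`∀ i, j ≤ m i`). -/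
theorem smallLambda_eq_union_of_shells (r : ℕ) [NeZero r] (m : Fin r → ℕ) :
    ({p | memSmallLambda m p} : Set (Fin r → ℕ)) =
        (⋃ j : ℕ, {p | (∀ i, j ≤ m i) ∧ memShellSmallLambda (fun i => m i - j) p}) ∧
      ∀ j₁ j₂ : ℕ, j₁ ≠ j₂ →
        Disjoint
          ({p | (∀ i, j₁ ≤ m i) ∧ memShellSmallLambda (fun i => m i - j₁) p} : Set (Fin r → ℕ))
          {p | (∀ i, j₂ ≤ m i) ∧ memShellSmallLambda (fun i => m i - j₂) p} := by
  constructor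
  · ext p
    simp only [Set.mem_setOf_eq, Set.mem_iUnion, memShellSmallLambda]
    constructor
    · intro hp
      obtain ⟨k, -, hk⟩ := Finset.exists_min_image Finset.univ
        (fun i => m (i - 1) + m i - p i) Finset.univ_nonempty
      set j : ℕ := (m (k - 1) + m k - p k) / 2 with hjdef
      have hjle : ∀ i, j ≤ m i := by
        intro i
        have h1 := hp i
        have h2 := hp k
        have h3 := hk i (Finset.mem_univ i)
        omega
      refine ⟨j, hjle, (mem_sub_iff m j hjle p).mpr ⟨hp, fun i => ?_⟩, fun hcon => ?_⟩
      · have h1 := hp i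
        have h2 := hp k
        have h3 := hk i (Finset.mem_univ i)
        omega
      · have h2 := hp k
        have h4 := hcon k
        simp only at h4
        have := hjle k; have := hjle (k - 1)
        omega
    · rintro ⟨j, hj, hmem, -⟩
      exact ((mem_sub_iff m j hj p).mp hmem).1
  · intro j₁ j₂ hne
    rw [Set.disjoint_left]
    rintro p ⟨hj1, hm1, hn1⟩ ⟨hj2, hm2, hn2⟩
    obtain ⟨hp, hb1⟩ := (mem_sub_iff m j₁ hj1 p).mp hm1
    obtain ⟨-, hb2⟩ := (mem_sub_iff m j₂ hj2 p).mp hm2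
    simp only [memSmallLambda, not_forall] at hn1 hn2
    obtain ⟨k₁, hk₁⟩ := hn1
    obtain ⟨k₂, hk₂⟩ := hn2
    have h1 := hp k₁
    have h2 := hp k₂
    have := hj1 k₁; have := hj1 (k₁ - 1); have := hj1 k₂; have := hj1 (k₂ - 1)
    have := hj2 k₁; have := hj2 (k₁ - 1); have := hj2 k₂; have := hj2 (k₂ - 1)
    have b11 := hb1 k₁; have b12 := hb1 k₂; have b21 := hb2 k₁; have b22 := hb2 k₂
    omega
end

section
/- For m ∈ ℕ^r with all m_i ≥ 1, λ_m is the disjoint union of Shell(λ_m) and λ_{m − (1,…,1)}. -/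
/-- For `m ∈ ℕ^r` with all `m_i ≥ 1`, `λ_m` is the disjoint union of
`Shell(λ_m)` and `λ_{m − (1,…,1)}`. -/
theorem smallLambda_eq_shell_union (r : ℕ) [NeZero r] (m : Fin r → ℕ)
    (h : ∀ i, 1 ≤ m i) :
    ({p | memSmallLambda m p} : Set (Fin r → ℕ)) =
        {p | memShellSmallLambda m p} ∪ {p | memSmallLambda (fun i => m i - 1) p} ∧
      Disjoint ({p | memShellSmallLambda m p} : Set (Fin r → ℕ))
        {p | memSmallLambda (fun i => m i - 1) p} := by
  have key : ∀ p : Fin r → ℕ, memSmallLambda m p →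
      (memSmallLambda (fun i => m i - 1) p ↔ memSmallLambda m (fun i => p i + 2)) := by
    intro p hp
    constructor
    · intro hq i
      have h1 := hq i
      have h2 := hp i
      have h3 := h i
      have h4 := h (i - 1)
      simp only [memSmallLambda] at h1 ⊢
      omega
    · intro hq i
      have h1 := hq i
      have h2 := hp i
      have h3 := h i
      have h4 := h (i - 1)
      simp only [memSmallLambda] at h1 ⊢
      omega
  have sub : ∀ p : Fin r → ℕ, memSmallLambda (fun i => m i - 1) p → memSmallLambda m p := by
    intro p hp i
    have h1 := hp i
    have h3 := h i
    have h4 := h (i - 1)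
    simp only at h1
    omega
  constructor
  · ext p
    simp only [Set.mem_setOf_eq, Set.mem_union, memShellSmallLambda]
    constructor
    · intro hp
      by_cases h2 : memSmallLambda m (fun i => p i + 2)
      · exact Or.inr ((key p hp).2 h2)
      · exact Or.inl ⟨hp, h2⟩
    · rintro (⟨hp, _⟩ | hp)
      · exact hp
      · exact sub p hp
  · rw [Set.disjoint_left]
    rintro p ⟨hp, hns⟩ hq
    exact hns ((key p hp).1 hq)
end

section
/- Let r ≥ 2, z ∈ ℤ^{r-1} with r ∣ Σ_{i=1}^{r-1} z_i, and s ∈ ℕ^r. Suppose z_k + (1/r)Σ_{i=1}^{r-1} z_i ≡ s_k (mod 2) for all k ∈ {1,…,r−1} and (1/r)Σ_{i=1}^{r-1} z_i ≡ s_r (mod 2). If n ∈ ℤ^r satisfies n_k = n_r + Σ_{i=1}^{k} z_i − (k/r)Σ_{i=1}^{r-1} z_i for 1 ≤ k ≤ r−1, then n_{k−1} + n_k ≡ s_k (mod 2) for all k ∈ {1,…,r} (indices mod r, n_0 = n_r). -/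
/-- With `r = m+1 ≥ 2`, `z ∈ ℤ^{r-1}` with `r ∣ Σ z_i` (say `Σ z_i = r·q`),
`s ∈ ℕ^r` with `z_k + q ≡ s_k (mod 2)` for `k < r` and `q ≡ s_r (mod 2)`:
if `n ∈ ℤ^r` satisfies `n_k = n_r + Σ_{i=1}^{k} z_i − (k/r)·Σ z_i` for
`1 ≤ k ≤ r−1`, then `n_{k−1} + n_k ≡ s_k (mod 2)` for all `k` (indices
mod `r`, `n_0 = n_r`). -/
theorem ray_parity (m : ℕ) (hm : 1 ≤ m) (z : Fin m → ℤ) (q : ℤ)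
    (hq : ((m : ℤ) + 1) * q = ∑ i, z i)
    (s : Fin (m + 1) → ℕ)
    (hk : ∀ k : Fin m, z k + q ≡ (s (Fin.castSucc k) : ℤ) [ZMOD 2])
    (hr : q ≡ (s (Fin.last m) : ℤ) [ZMOD 2])
    (n : Fin (m + 1) → ℤ)
    (hn : ∀ k : Fin m,
      n (Fin.castSucc k) =
        n (Fin.last m) + (∑ i ∈ Finset.univ.filter (· ≤ k), z i)
          - ((k : ℤ) + 1) * q) :
    ∀ k : Fin (m + 1), n (k - 1) + n k ≡ (s k : ℤ) [ZMOD 2] := by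
  intro k
  induction k using Fin.cases with
  | zero =>
    have h0 : (0 : Fin (m + 1)) - 1 = Fin.last m :=
      Fin.ext (by rw [zero_sub, Fin.coe_neg_one, Fin.val_last])
    rw [h0]
    have e : Fin.castSucc (⟨0, hm⟩ : Fin m) = 0 := Fin.ext (by simp)
    have hn0 := hn ⟨0, hm⟩
    have hk0 := hk ⟨0, hm⟩
    rw [e] at hn0 hk0
    have hfilter : Finset.univ.filter (· ≤ (⟨0, hm⟩ : Fin m)) = {(⟨0, hm⟩ : Fin m)} := by
      ext i
      simp only [Finset.mem_filter, Finset.mem_univ, true_and, Finset.mem_singleton,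
        Fin.le_def, Fin.ext_iff]
      omega
    rw [hfilter, Finset.sum_singleton] at hn0
    have hc : (((⟨0, hm⟩ : Fin m) : ℕ) : ℤ) = 0 := by norm_num
    rw [hc] at hn0
    have hn0' : n 0 = n (Fin.last m) + z ⟨0, hm⟩ - q := by rw [hn0]; ring
    rw [Int.ModEq] at hk0 ⊢
    omega
  | succ j =>
    have hsub : (Fin.succ j) - 1 = Fin.castSucc j := by
      rw [Fin.ext_iff, Fin.coe_sub_one]
      simp [Fin.succ_ne_zero]
    rw [hsub]
    by_cases hlast : (j : ℕ) + 1 = m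
    · have e : Fin.succ j = Fin.last m := Fin.ext (by simp [hlast])
      rw [e]
      have hnj := hn j
      have hfilter : Finset.univ.filter (· ≤ j) = Finset.univ := by
        ext i
        simp only [Finset.mem_filter, Finset.mem_univ, true_and, Fin.le_def, iff_true]
        have := i.isLt
        omega
      rw [hfilter, ← hq] at hnj
      have hc : ((j : ℕ) : ℤ) + 1 = (m : ℤ) := by exact_mod_cast hlast
      have hnj' : n (Fin.castSucc j) = n (Fin.last m) + q := by
        rw [hnj, ← hc]; ring
      rw [Int.ModEq] at hr ⊢
      omega
    · have hlt : (j : ℕ) + 1 < m := lt_of_le_of_ne j.isLt hlast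
      set j' : Fin m := ⟨(j : ℕ) + 1, hlt⟩ with hj'
      have e : Fin.succ j = Fin.castSucc j' := Fin.ext (by simp [hj'])
      rw [e]
      have hnj := hn j
      have hnj' := hn j'
      have hnotmem : j' ∉ Finset.univ.filter (· ≤ j) := by
        simp only [Finset.mem_filter, Finset.mem_univ, true_and, Fin.le_def, hj']
        omega
      have hfilter : Finset.univ.filter (· ≤ j') = insert j' (Finset.univ.filter (· ≤ j)) := by
        ext i
        simp only [Finset.mem_filter, Finset.mem_univ, true_and, Finset.mem_insert,
          Fin.le_def, Fin.ext_iff, hj']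
        omega
      rw [hfilter, Finset.sum_insert hnotmem] at hnj'
      have hkj := hk j'
      have hc : ((j' : ℕ) : ℤ) = ((j : ℕ) : ℤ) + 1 := by rw [hj']; push_cast; ring
      have key : n (Fin.castSucc j') = n (Fin.castSucc j) + z j' - q := by
        rw [hnj', hnj, hc]; ring
      rw [Int.ModEq] at hkj ⊢
      omega
end
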